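/- Let n ≥ 1 and let V be a diagonal 2^n × 2^n unitary matrix with det V = 1. Then there exist real numbers t_A, indexed by the IZ-strings A of length n with A ≠ I_{2^n}, such that V = ∏_A exp(i t_A A); the factors are commuting diagonal matrices, so the product is independent of the order of the factors. -/

import Mathlib

/-!
A diagonal unitary `V` of determinant one is `diag (exp (i θ_j))` with real phases summing to
zero (shift one phase by the appropriate multiple of `2π`). The IZ-strings are diagonal with
`±1` entries, and their sign vectors are the Walsh–Hadamard basis of `ℝ^(2^n)`, which is
orthogonal with all squared norms `2^n`. Expanding `θ` in this basis gives coefficients `t_A`,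
and the coefficient of the identity string is `(∑ θ_j) / 2^n = 0`. Since all factors are
diagonal, `∏_A exp (i t_A A) = diag (exp (i ∑_A t_A A_jj)) = diag (exp (i θ_j)) = V`.
-/

open Matrix

/-- The Pauli matrix `σ3`. -/
noncomputable def σ3 : Matrix (Fin 2) (Fin 2) ℂ := !![1, 0; 0, -1]

/-- The 2×2 factor of an IZ-string: `σ3` if the bit is `true`, `I_2` otherwise. -/
noncomputable def izBit (b : Bool) : Matrix (Fin 2) (Fin 2) ℂ := if b then σ3 else 1

/-- Kronecker product `A ⊗ B` with a `2 × 2` last factor, realized on `Fin (k * 2)`. -/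
noncomputable def kronLast {k : ℕ} (A : Matrix (Fin k) (Fin k) ℂ)
    (B : Matrix (Fin 2) (Fin 2) ℂ) : Matrix (Fin (k * 2)) (Fin (k * 2)) ℂ :=
  Matrix.of fun i j =>
    A ⟨(i : ℕ) / 2, by omega⟩ ⟨(j : ℕ) / 2, by omega⟩ *
      B ⟨(i : ℕ) % 2, by omega⟩ ⟨(j : ℕ) % 2, by omega⟩

/-- `IZ n f` is the IZ-string `A_1 ⊗ ⋯ ⊗ A_n` of length `n`, where `A_i = σ3` if `f i = true`
and `A_i = I_2` if `f i = false`. -/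
noncomputable def IZ : (n : ℕ) → (Fin n → Bool) → Matrix (Fin (2 ^ n)) (Fin (2 ^ n)) ℂ
  | 0, _ => 1
  | (n + 1), f => kronLast (IZ n fun i => f i.castSucc) (izBit (f (Fin.last n)))

/-- The diagonal of `IZ n f`; the last tensor factor reads the lowest binary digit of `i`. -/
def izSign : (n : ℕ) → (Fin n → Bool) → Fin (2 ^ n) → ℝ
  | 0, _, _ => 1
  | n + 1, f, i =>
      izSign n (fun k => f k.castSucc)
          ⟨(i : ℕ) / 2, Nat.div_lt_of_lt_mul (by simpa [pow_succ, mul_comm] using i.isLt)⟩ *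
        if f (Fin.last n) ∧ (i : ℕ) % 2 = 1 then -1 else 1

theorem izBit_eq_diagonal (b : Bool) :
    izBit b = diagonal fun r : Fin 2 => if b ∧ r = 1 then -1 else 1 := by
  cases b <;> ext i j <;> fin_cases i <;> fin_cases j <;> simp [izBit, σ3]

theorem kronLast_diagonal {k : ℕ} (a : Fin k → ℂ) (b : Fin 2 → ℂ) :
    kronLast (diagonal a) (diagonal b) =
      diagonal fun i : Fin (k * 2) => a ⟨i / 2, by omega⟩ * b ⟨i % 2, by omega⟩ := by
  ext i j
  by_cases hij : i = j
  · subst hij; simp [kronLast]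
  · have : (i : ℕ) / 2 ≠ j / 2 ∨ (i : ℕ) % 2 ≠ j % 2 := by omega
    rcases this with h | h <;> simp [kronLast, diagonal_apply, hij, h]

theorem IZ_eq_diagonal (n : ℕ) (f : Fin n → Bool) :
    IZ n f = diagonal fun i => (izSign n f i : ℂ) := by
  induction n with
  | zero => simp [IZ, izSign]
  | succ n ih =>
    rw [IZ, ih, izBit_eq_diagonal, kronLast_diagonal]
    congr 1
    funext i
    have hbit : (⟨i % 2, by omega⟩ : Fin 2) = 1 ↔ (i : ℕ) % 2 = 1 := Fin.ext_iff
    simp only [izSign, hbit]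
    split_ifs <;> simp

theorem izSign_false (n : ℕ) (i : Fin (2 ^ n)) : izSign n (fun _ => false) i = 1 := by
  induction n with
  | zero => rfl
  | succ n ih => simp [izSign, ih]

theorem sum_izSign_mul_izSign (n : ℕ) (i j : Fin (2 ^ n)) :
    ∑ f, izSign n f i * izSign n f j = if i = j then 2 ^ n else 0 := by
  induction n with
  | zero => simp [izSign, Fin.ext_iff]
  | succ n ih =>
    rw [← (Fin.snocEquiv fun _ => Bool).sum_comp, Fintype.sum_prod_type]
    simp only [Fin.snocEquiv_apply, izSign, Fin.snoc_castSucc, Fin.snoc_last,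
      mul_mul_mul_comm _ (ite _ _ _), ← Finset.sum_mul, ih, ← Finset.mul_sum, Fintype.sum_bool]
    have hij : i = j ↔ (i : ℕ) / 2 = j / 2 ∧ (i : ℕ) % 2 = j % 2 := by rw [Fin.ext_iff]; omega
    rcases Nat.mod_two_eq_zero_or_one i with hi | hi <;>
      rcases Nat.mod_two_eq_zero_or_one j with hj | hj <;>
      by_cases hq : (i : ℕ) / 2 = j / 2 <;>
      simp [hij, hi, hj, hq, pow_succ, one_add_one_eq_two]

noncomputable def walshCoeff (n : ℕ) (θ : Fin (2 ^ n) → ℝ) (f : Fin n → Bool) : ℝ :=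
  (∑ j, izSign n f j * θ j) / 2 ^ n

theorem walshCoeff_false (n : ℕ) (θ : Fin (2 ^ n) → ℝ) :
    walshCoeff n θ (fun _ => false) = (∑ j, θ j) / 2 ^ n := by
  simp [walshCoeff, izSign_false]

theorem sum_walshCoeff_mul_izSign (n : ℕ) (θ : Fin (2 ^ n) → ℝ) (i : Fin (2 ^ n)) :
    ∑ f, walshCoeff n θ f * izSign n f i = θ i := by
  calc ∑ f, walshCoeff n θ f * izSign n f i
      = (∑ j, (∑ f, izSign n f j * izSign n f i) * θ j) / 2 ^ n := by
        simp only [walshCoeff, Finset.sum_div, Finset.sum_mul, div_mul_eq_mul_div]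
        rw [Finset.sum_comm]
        exact Finset.sum_congr rfl fun _ _ => Finset.sum_congr rfl fun _ _ => by ring
    _ = θ i := by simp [sum_izSign_mul_izSign]

open Complex
open scoped Real

theorem exp_smul_IZ (n : ℕ) (f : Fin n → Bool) (c : ℂ) :
    NormedSpace.exp (c • IZ n f) = diagonal fun i => exp (c * izSign n f i) := by
  rw [IZ_eq_diagonal, ← diagonal_smul, exp_diagonal]
  congr 1
  funext i
  simp [exp_eq_exp_ℂ]

theorem list_prod_exp_smul_IZ (n : ℕ) (s : Finset (Fin n → Bool)) (t : (Fin n → Bool) → ℝ) :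
    (s.toList.map fun f => NormedSpace.exp ((I * t f) • IZ n f)).prod =
      diagonal fun i => exp (I * ∑ f ∈ s, t f * izSign n f i) := by
  have hfactor : (fun f => NormedSpace.exp ((I * t f) • IZ n f)) =
      diagonalRingHom _ ℂ ∘ fun f i => exp (I * t f * izSign n f i) := by
    funext f
    exact exp_smul_IZ n f _
  rw [hfactor, ← List.map_map, ← map_list_prod, Finset.prod_map_toList, diagonalRingHom_apply]
  congr 1
  funext i
  simp [Finset.prod_apply, ← exp_sum, Finset.mul_sum, mul_assoc]

theorem norm_eq_one_of_diagonal_mem_unitaryGroup {ι : Type*} [Fintype ι] [DecidableEq ι]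
    {d : ι → ℂ} (hd : diagonal d ∈ unitaryGroup ι ℂ) (i : ι) : ‖d i‖ = 1 := by
  rw [mem_unitaryGroup_iff, star_eq_conjTranspose, diagonal_conjTranspose,
    diagonal_mul_diagonal, ← diagonal_one, diagonal_eq_diagonal_iff] at hd
  have hsq : ((‖d i‖ ^ 2 : ℝ) : ℂ) = 1 := by
    simpa [mul_conj'] using hd i
  exact (pow_eq_one_iff_of_nonneg (norm_nonneg _) two_ne_zero).1 (mod_cast hsq)

theorem exists_phases_of_norm_eq_one_of_prod_eq_one {ι : Type*} [Fintype ι] [DecidableEq ι]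
    {d : ι → ℂ} (hd : ∀ i, ‖d i‖ = 1) (hprod : ∏ i, d i = 1) :
    ∃ θ : ι → ℝ, ∑ i, θ i = 0 ∧ ∀ i, d i = exp (I * θ i) := by
  cases isEmpty_or_nonempty ι with
  | inl _ => exact ⟨0, by simp, isEmptyElim⟩
  | inr hne =>
    obtain ⟨i₀⟩ := hne
    have hd_exp : ∀ i, d i = exp (I * (d i).arg) := fun i => by
      simpa [hd i, mul_comm] using (norm_mul_exp_arg_mul_I (d i)).symm
    obtain ⟨m, hm⟩ : ∃ m : ℤ, I * ↑(∑ i, (d i).arg) = m * (2 * π * I) := by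
      rw [← exp_eq_one_iff, ← hprod, ofReal_sum, Finset.mul_sum, exp_sum]
      exact Finset.prod_congr rfl fun i _ => (hd_exp i).symm
    have hsum : ∑ i, (d i).arg = m * (2 * π) := by
      apply_fun (fun z => (z / I).re) at hm
      simpa [mul_comm, mul_assoc] using hm
    refine ⟨fun i => (d i).arg - (Pi.single i₀ (m * (2 * π)) : ι → ℝ) i, ?_, fun i => ?_⟩
    · simp [Finset.sum_sub_distrib, hsum]
    · by_cases hi : i = i₀
      · subst hi
        conv_lhs => rw [hd_exp i]
        simp only [Pi.single_eq_same]
        rw [exp_eq_exp_iff_exists_int]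
        exact ⟨m, by push_cast; ring⟩
      · simp [Pi.single_eq_of_ne hi, ← hd_exp i]

theorem diagonal_su_decomp_general (n : ℕ) (V : Matrix (Fin (2 ^ n)) (Fin (2 ^ n)) ℂ)
    (hdiag : ∀ i j, i ≠ j → V i j = 0)
    (hU : V ∈ Matrix.unitaryGroup (Fin (2 ^ n)) ℂ) (hdet : V.det = 1) :
    ∃ t : (Fin n → Bool) → ℝ,
      V = (((Finset.univ : Finset (Fin n → Bool)).filter
              (fun f => f ≠ fun _ => false)).toList.map
            (fun f => NormedSpace.exp ((Complex.I * (t f : ℂ)) • IZ n f))).prod := by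
  have hV : diagonal V.diag = V := IsDiag.diagonal_diag hdiag
  rw [← hV, det_diagonal] at hdet
  rw [← hV] at hU
  obtain ⟨θ, hθ_sum, hθ⟩ := exists_phases_of_norm_eq_one_of_prod_eq_one
    (norm_eq_one_of_diagonal_mem_unitaryGroup hU) hdet
  have hcoeff_false : walshCoeff n θ (fun _ => false) = 0 := by
    rw [walshCoeff_false, hθ_sum, zero_div]
  refine ⟨walshCoeff n θ, ?_⟩
  rw [list_prod_exp_smul_IZ, Finset.filter_ne', ← hV]
  congr 1
  funext i
  rw [Finset.sum_erase _ (by rw [hcoeff_false, zero_mul]), sum_walshCoeff_mul_izSign]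
  exact hθ i

/-- Let `n ≥ 1` and let `V` be a diagonal `2^n × 2^n` unitary matrix with
`det V = 1`.  Then there exist reals `t_A`, indexed by the non-identity IZ-strings `A` of
length `n`, such that `V = ∏_A exp(i t_A A)`. -/
theorem diagonal_su_decomp (n : ℕ) (hn : 1 ≤ n) (V : Matrix (Fin (2 ^ n)) (Fin (2 ^ n)) ℂ)
    (hdiag : ∀ i j, i ≠ j → V i j = 0)
    (hU : V ∈ Matrix.unitaryGroup (Fin (2 ^ n)) ℂ) (hdet : V.det = 1) :
    ∃ t : (Fin n → Bool) → ℝ,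
      V = (((Finset.univ : Finset (Fin n → Bool)).filter
              (fun f => f ≠ fun _ => false)).toList.map
            (fun f => NormedSpace.exp ((Complex.I * (t f : ℂ)) • IZ n f))).prod :=
  diagonal_su_decomp_general n V hdiag hU hdet
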